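/- For every 0 ≤ i ≤ n−1 the following identities of bounded linear maps hold: (1) P_{(ker S^i)^⊥} ∘ D̃^{i−1} ∘ T^i = −T^{i+1} ∘ D^i ∘ P_{ran S^{i−1}} (as maps Z^i → Z̃^i); (2) P_{(ran S^i)^⊥} ∘ D^i ∘ P_{ran S^{i−1}} = 0; (3) D^{i+1} ∘ P_{ran S^i} ∘ D^i = −D^{i+1} ∘ P_{(ran S^i)^⊥} ∘ D^i; (4) P_{(ran S^{i+1})^⊥} ∘ D^{i+1} ∘ P_{(ran S^i)^⊥} ∘ D^i = 0; (5) P_{ker S^{i+1}} ∘ D̃^i ∘ P_{ker S^i} = D̃^i ∘ P_{ker S^i}. -/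

import Mathlib

/-!
Everything follows from two facts. Anticommutativity `S^{i+1} D̃^i = -D^{i+1} S^i` makes `D`
map `ran S^{i-1}` into `ran S^i` and `D̃` map `ker S^i` into `ker S^{i+1}`, and an orthogonal
projection fixes its range. Identities (2), (4) and (5) are instances of this, (3) is
`D^{i+1} D^i = 0`, and (1) comes from writing `P_{ran S^{i-1}} = S^{i-1} T^i`, moving `D^i`
across `S^{i-1}` and applying `T^{i+1} S^i = P_{(ker S^i)^⊥}`.
-/

noncomputable section

/-- `P_{ran S^{i-1}} : Z^i → Z^i` (with `P_{ran S^{-1}} = 0`). -/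
def projS {Z : ℕ → Type*}
    [∀ i, NormedAddCommGroup (Z i)] [∀ i, InnerProductSpace ℝ (Z i)]
    (Pran : ∀ i, Z (i + 1) →L[ℝ] Z (i + 1)) : ∀ i, Z i →L[ℝ] Z i
  | 0 => 0
  | m + 1 => Pran m

/-- `D̃^{i-1} ∘ T^i : Z^i → Z̃^i` (zero for `i = 0`). -/
def DtT {Z Zt : ℕ → Type*}
    [∀ i, NormedAddCommGroup (Z i)] [∀ i, InnerProductSpace ℝ (Z i)]
    [∀ i, NormedAddCommGroup (Zt i)] [∀ i, InnerProductSpace ℝ (Zt i)]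
    (Dt : ∀ i, Zt i →L[ℝ] Zt (i + 1)) (T : ∀ i, Z (i + 1) →L[ℝ] Zt i) :
    ∀ i, Z i →L[ℝ] Zt i
  | 0 => 0
  | m + 1 => (Dt m).comp (T m)

section OrthogonalProjection

variable {𝕜 E : Type*} [RCLike 𝕜] [NormedAddCommGroup E] [InnerProductSpace 𝕜 E]
  {K : Submodule 𝕜 E} {P : E → E}

theorem Submodule.sub_apply_eq_zero_of_mem (hmem : ∀ x, P x ∈ K) (horth : ∀ x, x - P x ∈ Kᗮ)
    {v : E} (hv : v ∈ K) : v - P v = 0 :=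
  Submodule.disjoint_def.mp K.orthogonal_disjoint _ (K.sub_mem hv (hmem v)) (horth v)

theorem Submodule.apply_eq_self_of_mem (hmem : ∀ x, P x ∈ K) (horth : ∀ x, x - P x ∈ Kᗮ)
    {v : E} (hv : v ∈ K) : P v = v :=
  (sub_eq_zero.mp (K.sub_apply_eq_zero_of_mem hmem horth hv)).symm

end OrthogonalProjection

section Anticommuting

variable {R Z₁ Z₂ Zt₀ Zt₁ : Type*} [Ring R]
  [AddCommGroup Z₁] [Module R Z₁] [AddCommGroup Z₂] [Module R Z₂]
  [AddCommGroup Zt₀] [Module R Zt₀] [AddCommGroup Zt₁] [Module R Zt₁]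
  {D : Z₁ →ₗ[R] Z₂} {Dt : Zt₀ →ₗ[R] Zt₁} {S₀ : Zt₀ →ₗ[R] Z₁} {S₁ : Zt₁ →ₗ[R] Z₂}

theorem map_mem_range_of_anticomm (hanti : ∀ y, S₁ (Dt y) = -D (S₀ y))
    {v : Z₁} (hv : v ∈ LinearMap.range S₀) : D v ∈ LinearMap.range S₁ := by
  obtain ⟨y, rfl⟩ := hv
  exact ⟨-Dt y, by rw [map_neg, hanti, neg_neg]⟩

theorem map_mem_ker_of_anticomm (hanti : ∀ y, S₁ (Dt y) = -D (S₀ y))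
    {v : Zt₀} (hv : v ∈ LinearMap.ker S₀) : Dt v ∈ LinearMap.ker S₁ := by
  rw [LinearMap.mem_ker] at hv ⊢
  rw [hanti, hv, map_zero, neg_zero]

theorem map_pseudoinverse_sub_proj_ker_eq_neg (hanti : ∀ y, S₁ (Dt y) = -D (S₀ y))
    {T₀ : Z₁ →ₗ[R] Zt₀} {T₁ : Z₂ →ₗ[R] Zt₁} {Pran₀ : Z₁ → Z₁} {Pker₁ : Zt₁ → Zt₁}
    (hST₀ : ∀ x, S₀ (T₀ x) = Pran₀ x) (hTS₁ : ∀ y, T₁ (S₁ y) = y - Pker₁ y) (x : Z₁) :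
    Dt (T₀ x) - Pker₁ (Dt (T₀ x)) = -T₁ (D (Pran₀ x)) := by
  rw [← hST₀, ← neg_neg (D (S₀ (T₀ x))), ← hanti, map_neg, hTS₁, neg_neg]

end Anticommuting

theorem stmt_8_general
    (n : ℕ)
    {Z Zt : ℕ → Type*}
    [∀ i, NormedAddCommGroup (Z i)] [∀ i, InnerProductSpace ℝ (Z i)]
    [∀ i, NormedAddCommGroup (Zt i)] [∀ i, InnerProductSpace ℝ (Zt i)]
    (D : ∀ i, Z i →L[ℝ] Z (i + 1)) (Dt : ∀ i, Zt i →L[ℝ] Zt (i + 1))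
    (S : ∀ i, Zt i →L[ℝ] Z (i + 1))
    (Pran : ∀ i, Z (i + 1) →L[ℝ] Z (i + 1)) (Pker : ∀ i, Zt i →L[ℝ] Zt i)
    (T : ∀ i, Z (i + 1) →L[ℝ] Zt i)
    (hDD : ∀ i (x : Z i), D (i + 1) (D i x) = 0)
    (hanti : ∀ i (x : Zt i), S (i + 1) (Dt i x) = -D (i + 1) (S i x))
    -- orthogonal projections onto `ran S^i` and `ker S^i`
    (hPranMem : ∀ i (x : Z (i + 1)), Pran i x ∈ LinearMap.range (S i : Zt i →ₗ[ℝ] Z (i + 1)))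
    (hPranOrth : ∀ i (x : Z (i + 1)), x - Pran i x ∈ (LinearMap.range (S i : Zt i →ₗ[ℝ] Z (i + 1)))ᗮ)
    (hPkerMem : ∀ i (x : Zt i), Pker i x ∈ LinearMap.ker (S i : Zt i →ₗ[ℝ] Z (i + 1)))
    (hPkerOrth : ∀ i (x : Zt i), x - Pker i x ∈ (LinearMap.ker (S i : Zt i →ₗ[ℝ] Z (i + 1)))ᗮ)
    -- `T i` is the Moore–Penrose pseudoinverse of `S i`
    (hTS : ∀ i (x : Zt i), T i (S i x) = x - Pker i x)
    (hST : ∀ i (x : Z (i + 1)), S i (T i x) = Pran i x) :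
    -- (1) `P_{(ker S^i)^⊥} ∘ D̃^{i-1} ∘ T^i = −T^{i+1} ∘ D^i ∘ P_{ran S^{i-1}}` on `Z^i`:
    (∀ i, i + 1 ≤ n → ∀ x : Z i,
      DtT Dt T i x - Pker i (DtT Dt T i x) = -(T i (D i (projS Pran i x)))) ∧
    -- (2) `P_{(ran S^i)^⊥} ∘ D^i ∘ P_{ran S^{i-1}} = 0`:
    (∀ i, i + 1 ≤ n → ∀ x : Z i,
      D i (projS Pran i x) - Pran i (D i (projS Pran i x)) = 0) ∧
    -- (3) `D^{i+1} ∘ P_{ran S^i} ∘ D^i = −D^{i+1} ∘ P_{(ran S^i)^⊥} ∘ D^i`: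
    (∀ i, i + 1 ≤ n → ∀ x : Z i,
      D (i + 1) (Pran i (D i x)) = -(D (i + 1) (D i x - Pran i (D i x)))) ∧
    -- (4) `P_{(ran S^{i+1})^⊥} ∘ D^{i+1} ∘ P_{(ran S^i)^⊥} ∘ D^i = 0`:
    (∀ i, i + 1 ≤ n → ∀ x : Z i,
      D (i + 1) (D i x - Pran i (D i x))
          - Pran (i + 1) (D (i + 1) (D i x - Pran i (D i x))) = 0) ∧
    -- (5) `P_{ker S^{i+1}} ∘ D̃^i ∘ P_{ker S^i} = D̃^i ∘ P_{ker S^i}`: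
    (∀ i, i + 1 ≤ n → ∀ x : Zt i,
      Pker (i + 1) (Dt i (Pker i x)) = Dt i (Pker i x)) := by
  have hD_range : ∀ i {v : Z (i + 1)}, v ∈ LinearMap.range (S i : Zt i →ₗ[ℝ] Z (i + 1)) →
      D (i + 1) v ∈ LinearMap.range (S (i + 1) : Zt (i + 1) →ₗ[ℝ] Z (i + 1 + 1)) :=
    fun i _ hv ↦ map_mem_range_of_anticomm (D := (D (i + 1)).toLinearMap) (hanti i) hv
  refine ⟨?_, ?_, ?_, ?_, ?_⟩
  · rintro (_ | m) _ x
    · simp [DtT, projS]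
    · exact map_pseudoinverse_sub_proj_ker_eq_neg (T₀ := T m) (T₁ := T (m + 1)) (hanti m)
        (hST m) (hTS (m + 1)) x
  · rintro (_ | m) _ x
    · simp [projS]
    · exact Submodule.sub_apply_eq_zero_of_mem (hPranMem (m + 1)) (hPranOrth (m + 1))
        (hD_range m (hPranMem m x))
  · intro i _ x
    rw [map_sub, hDD, zero_sub, neg_neg]
  · intro i _ x
    refine Submodule.sub_apply_eq_zero_of_mem (hPranMem (i + 1)) (hPranOrth (i + 1)) ?_
    rw [map_sub, hDD, zero_sub]
    exact neg_mem (hD_range i (hPranMem i (D i x)))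
  · intro i _ x
    exact Submodule.apply_eq_self_of_mem (hPkerMem (i + 1)) (hPkerOrth (i + 1))
      (map_mem_ker_of_anticomm (Dt := (Dt i).toLinearMap) (hanti i) (hPkerMem i x))

theorem stmt_8
    (n : ℕ) (hn : 1 ≤ n)
    {Z Zt : ℕ → Type*}
    [∀ i, NormedAddCommGroup (Z i)] [∀ i, InnerProductSpace ℝ (Z i)] [∀ i, CompleteSpace (Z i)]
    [∀ i, NormedAddCommGroup (Zt i)] [∀ i, InnerProductSpace ℝ (Zt i)] [∀ i, CompleteSpace (Zt i)]
    (D : ∀ i, Z i →L[ℝ] Z (i + 1)) (Dt : ∀ i, Zt i →L[ℝ] Zt (i + 1))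
    (S : ∀ i, Zt i →L[ℝ] Z (i + 1))
    (Pran : ∀ i, Z (i + 1) →L[ℝ] Z (i + 1)) (Pker : ∀ i, Zt i →L[ℝ] Zt i)
    (T : ∀ i, Z (i + 1) →L[ℝ] Zt i)
    (hDD : ∀ i (x : Z i), D (i + 1) (D i x) = 0)
    (hDtDt : ∀ i (x : Zt i), Dt (i + 1) (Dt i x) = 0)
    (hDtop : ∀ i, n ≤ i → D i = 0) (hDttop : ∀ i, n ≤ i → Dt i = 0)
    (hStop : ∀ i, n ≤ i → S i = 0)
    (hanti : ∀ i (x : Zt i), S (i + 1) (Dt i x) = -D (i + 1) (S i x))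
    (hScl : ∀ i, IsClosed ((LinearMap.range (S i : Zt i →ₗ[ℝ] Z (i + 1)) : Submodule ℝ (Z (i + 1))) : Set (Z (i + 1))))
    -- orthogonal projections onto `ran S^i` and `ker S^i`
    (hPranMem : ∀ i (x : Z (i + 1)), Pran i x ∈ LinearMap.range (S i : Zt i →ₗ[ℝ] Z (i + 1)))
    (hPranOrth : ∀ i (x : Z (i + 1)), x - Pran i x ∈ (LinearMap.range (S i : Zt i →ₗ[ℝ] Z (i + 1)))ᗮ)
    (hPkerMem : ∀ i (x : Zt i), Pker i x ∈ LinearMap.ker (S i : Zt i →ₗ[ℝ] Z (i + 1)))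
    (hPkerOrth : ∀ i (x : Zt i), x - Pker i x ∈ (LinearMap.ker (S i : Zt i →ₗ[ℝ] Z (i + 1)))ᗮ)
    -- `T i` is the Moore–Penrose pseudoinverse of `S i`
    (hTzero : ∀ i, ∀ x ∈ (LinearMap.range (S i : Zt i →ₗ[ℝ] Z (i + 1)))ᗮ, T i x = 0)
    (hTS : ∀ i (x : Zt i), T i (S i x) = x - Pker i x)
    (hST : ∀ i (x : Z (i + 1)), S i (T i x) = Pran i x) :
    -- (1) `P_{(ker S^i)^⊥} ∘ D̃^{i-1} ∘ T^i = −T^{i+1} ∘ D^i ∘ P_{ran S^{i-1}}` on `Z^i`: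
    (∀ i, i + 1 ≤ n → ∀ x : Z i,
      DtT Dt T i x - Pker i (DtT Dt T i x) = -(T i (D i (projS Pran i x)))) ∧
    -- (2) `P_{(ran S^i)^⊥} ∘ D^i ∘ P_{ran S^{i-1}} = 0`:
    (∀ i, i + 1 ≤ n → ∀ x : Z i,
      D i (projS Pran i x) - Pran i (D i (projS Pran i x)) = 0) ∧
    -- (3) `D^{i+1} ∘ P_{ran S^i} ∘ D^i = −D^{i+1} ∘ P_{(ran S^i)^⊥} ∘ D^i`:
    (∀ i, i + 1 ≤ n → ∀ x : Z i,
      D (i + 1) (Pran i (D i x)) = -(D (i + 1) (D i x - Pran i (D i x)))) ∧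
    -- (4) `P_{(ran S^{i+1})^⊥} ∘ D^{i+1} ∘ P_{(ran S^i)^⊥} ∘ D^i = 0`:
    (∀ i, i + 1 ≤ n → ∀ x : Z i,
      D (i + 1) (D i x - Pran i (D i x))
          - Pran (i + 1) (D (i + 1) (D i x - Pran i (D i x))) = 0) ∧
    -- (5) `P_{ker S^{i+1}} ∘ D̃^i ∘ P_{ker S^i} = D̃^i ∘ P_{ker S^i}`:
    (∀ i, i + 1 ≤ n → ∀ x : Zt i,
      Pker (i + 1) (Dt i (Pker i x)) = Dt i (Pker i x)) :=
  stmt_8_general n D Dt S Pran Pker T hDD hanti hPranMem hPranOrth hPkerMem hPkerOrth hTS hST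

end
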